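/- arXiv:2504.15036 — 2 statements merged into one kernel-verified Lean document; each statement's English description precedes it below -/
import Mathlib

section
/- Relating the location-clock and Boolean-matrix instrumentations: for a thread τ and location x, T_HB(τ)(x) = W_HB(x)(x) if and only if there exists e ∈ E^τ ∪ Init with (wmax_x, e) ∈ hb?; and analogously T_SC(τ)(x) = W_SC(x)(x) if and only if there exists e ∈ E^τ ∪ Init with (wmax_x, e) ∈ hbSC?. -/
/-- Happens-before of an execution graph. -/
def hb {Ev : Type} (po rf : Ev → Ev → Prop) : Ev → Ev → Prop :=
  Relation.TransGen fun a b => po a b ∨ rf a b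

/-- SC-happens-before of an execution graph (fr := rf⁻¹ ; mo is inlined). -/
def hbSC {Ev : Type} (po rf mo : Ev → Ev → Prop) : Ev → Ev → Prop :=
  Relation.TransGen fun a b => po a b ∨ rf a b ∨ mo a b ∨ ∃ w, rf w a ∧ mo w b

/-- Relating LC and BM instrumentations: T_HB(τ)(x) = W_HB(x)(x) = ts(wmax_x)
iff some event of thread τ (or initialization event) is hb?-after wmax_x; and
analogously for the SC components with hbSC. -/
theorem stmt10 {Ev Loc Tid : Type} [Finite Ev]
    (locOf : Ev → Loc) (isWrite : Ev → Prop) (tid : Ev → Tid) (Init : Set Ev)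
    (po rf mo : Ev → Ev → Prop) (τ : Tid) (x : Loc)
    (hwr : ∀ a b, mo a b → isWrite a ∧ isWrite b ∧ locOf a = locOf b)
    (hirr : Irreflexive mo) (htrans : Transitive mo)
    (htotal : ∀ a b, isWrite a → isWrite b → locOf a = locOf b → a ≠ b →
      mo a b ∨ mo b a)
    (init : Ev) (hinit : init ∈ Init ∧ isWrite init ∧ locOf init = x)
    (wmax : Ev) (hwm : isWrite wmax) (hlm : locOf wmax = x)
    (hmax : ∀ w, isWrite w → locOf w = x → w ≠ wmax → mo w wmax) :
    (sSup {t | ∃ w, isWrite w ∧ locOf w = x ∧ t = {u | mo u w}.ncard ∧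
        ∃ e, (tid e = τ ∨ e ∈ Init) ∧ Relation.ReflGen (hb po rf) w e} =
          {u | mo u wmax}.ncard ↔
      ∃ e, (tid e = τ ∨ e ∈ Init) ∧ Relation.ReflGen (hb po rf) wmax e) ∧
    (sSup {t | ∃ w, isWrite w ∧ locOf w = x ∧ t = {u | mo u w}.ncard ∧
        ∃ e, (tid e = τ ∨ e ∈ Init) ∧ Relation.ReflGen (hbSC po rf mo) w e} =
          {u | mo u wmax}.ncard ↔
      ∃ e, (tid e = τ ∨ e ∈ Init) ∧ Relation.ReflGen (hbSC po rf mo) wmax e) := by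
  have hlt : ∀ w, isWrite w → locOf w = x → w ≠ wmax →
      {u | mo u w}.ncard < {u | mo u wmax}.ncard := by
    intro w hw hlw hne
    have hmw := hmax w hw hlw hne
    apply Set.ncard_lt_ncard
    · constructor
      · intro u hu; exact htrans hu hmw
      · intro hsub; exact hirr w (hsub hmw)
    · exact Set.toFinite _
  have key : ∀ R : Ev → Ev → Prop,
      (sSup {t | ∃ w, isWrite w ∧ locOf w = x ∧ t = {u | mo u w}.ncard ∧
        ∃ e, (tid e = τ ∨ e ∈ Init) ∧ Relation.ReflGen R w e} =
          {u | mo u wmax}.ncard ↔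
      ∃ e, (tid e = τ ∨ e ∈ Init) ∧ Relation.ReflGen R wmax e) := by
    intro R
    set N := {u | mo u wmax}.ncard with hN
    set S := {t | ∃ w, isWrite w ∧ locOf w = x ∧ t = {u | mo u w}.ncard ∧
        ∃ e, (tid e = τ ∨ e ∈ Init) ∧ Relation.ReflGen R w e} with hS
    have hbdd : ∀ t ∈ S, t ≤ N := by
      rintro t ⟨w, hw, hl, rfl, _⟩
      by_cases hwe : w = wmax
      · subst hwe; exact le_rfl
      · exact le_of_lt (hlt w hw hl hwe)
    constructor
    · intro hsup
      have hne : S.Nonempty :=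
        ⟨_, init, hinit.2.1, hinit.2.2, rfl, init, Or.inr hinit.1, Relation.ReflGen.refl⟩
      have hmem : sSup S ∈ S := Nat.sSup_mem hne ⟨N, hbdd⟩
      rw [hsup] at hmem
      obtain ⟨w, hw, hl, heq, e, he, hr⟩ := hmem
      by_cases hwe : w = wmax
      · subst hwe; exact ⟨e, he, hr⟩
      · exact absurd heq.symm (ne_of_lt (hlt w hw hl hwe))
    · rintro ⟨e, he, hr⟩
      have hmem : N ∈ S := ⟨wmax, hwm, hlm, rfl, e, he, hr⟩
      exact le_antisymm (csSup_le ⟨N, hmem⟩ hbdd) (le_csSup ⟨N, hbdd⟩ hmem)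
  exact ⟨key _, key _⟩
end

section
/- Completeness of the vector-clock race check: with the setup of the soundness theorem, if e races with some w^π ∈ W_n^π (i.e., e and w^π are hb-unordered, e is not by thread π), then t₂ < t₁; concretely, E₂ ⊆ E₁, W_n^π ≠ ∅, and π ≠ tid(e), so t₂ = |E₂| ≤ |E₁| < |E₁| + 1 = t₁. -/
open Classical in
/-- Completeness of the vector-clock race check: if the po-maximal access e to
non-atomic location n races with some write to n by thread π, then E₂ ⊆ E₁ and
t₂ < t₁. -/
theorem stmt16 {Ev Tid : Type} [Finite Ev]
    (tid : Ev → Tid) (isRel : Ev → Prop)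
    (po hbr : Ev → Ev → Prop)
    (Wn Rn : Set Ev) (π : Tid) (e : Ev)
    (hhb_po : ∀ a b, po a b → hbr a b)
    (hhb_trans : Transitive hbr) (hhb_irr : Irreflexive hbr)
    (hpo_total : ∀ a b, tid a = π → tid b = π → a ≠ b → po a b ∨ po b a)
    (hpo_max : ∀ a, ¬ po e a)
    (hacc : e ∈ Rn ∪ Wn)
    (wπ : Ev) (hwπ : wπ ∈ Wn) (htidw : tid wπ = π)
    (hrace1 : ¬ hbr wπ e) (hrace2 : ¬ hbr e wπ) (htid : π ≠ tid e) :
    {a | tid a = π ∧ isRel a ∧ (a = e ∨ hbr a e)} ⊆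
      {a | tid a = π ∧ isRel a ∧ ∃ w ∈ Wn, po a w} ∧
    {a | tid a = π ∧ isRel a ∧ (a = e ∨ hbr a e)}.ncard +
      (if π = tid e then 1 else 0) <
    {a | tid a = π ∧ isRel a ∧ ∃ w ∈ Wn, po a w}.ncard +
      (if ∃ w ∈ Wn, tid w = π then 1 else 0) := by
  have hsub : {a | tid a = π ∧ isRel a ∧ (a = e ∨ hbr a e)} ⊆
      {a | tid a = π ∧ isRel a ∧ ∃ w ∈ Wn, po a w} := by
    rintro a ⟨hta, hra, hae⟩
    have hhbae : hbr a e := by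
      rcases hae with rfl | h
      · exact absurd hta.symm htid
      · exact h
    refine ⟨hta, hra, wπ, hwπ, ?_⟩
    have hne : a ≠ wπ := by rintro rfl; exact hrace1 hhbae
    rcases hpo_total a wπ hta htidw hne with h | h
    · exact h
    · exact absurd (hhb_trans (hhb_po _ _ h) hhbae) hrace1
  refine ⟨hsub, ?_⟩
  have h1 : (if π = tid e then 1 else 0) = 0 := if_neg htid
  have h2 : (if ∃ w ∈ Wn, tid w = π then 1 else 0) = 1 := if_pos ⟨wπ, hwπ, htidw⟩
  rw [h1, h2, add_zero]
  have hc : {a | tid a = π ∧ isRel a ∧ (a = e ∨ hbr a e)}.ncard ≤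
      {a | tid a = π ∧ isRel a ∧ ∃ w ∈ Wn, po a w}.ncard :=
    Set.ncard_le_ncard hsub (Set.toFinite _)
  omega
end
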